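/- arXiv:2503.11879 — 2 statements merged into one kernel-verified Lean document; each statement's English description precedes it below -/
import Mathlib

section
/- Let k > 0 be a real number that is not an integer multiple of π, and let ω : ℤ → ℕ satisfy ω_n ≥ 1 for all n. Suppose that for each n ∈ ℤ and each j with 1 ≤ j ≤ ω_n there is a twice differentiable function u_{n,j} : ℝ → ℝ with u_{n,j}''(x) = −k²·u_{n,j}(x) for all x ∈ [n, n+1], that there is a function a : ℤ → ℝ with u_{n,j}(n) = a(n) and u_{n,j}(n+1) = a(n+1) for all such n, j (continuity at the vertices), and that Kirchhoff's condition holds at every vertex: Σ_{j=1}^{ω_n} u'_{n,j}(n) = Σ_{j=1}^{ω_{n−1}} u'_{n−1,j}(n) for every n ∈ ℤ. Then the vertex values satisfy the difference equation ω_n·a(n+1) + ω_{n−1}·a(n−1) − (ω_n + ω_{n−1})·cos(k)·a(n) = 0 for every n ∈ ℤ. -/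
open Real Set

/-! A solution of `u'' = -k²u` turns the point `(u, u'/k)` by the angle `k (x - c)`, so on an
edge `[c, c + 1]` with `sin k ≠ 0` the Dirichlet data determine the Neumann data:
`u'(c) = k / sin k · (u(c+1) - u(c) cos k)` and `u'(c+1) = k / sin k · (u(c+1) cos k - u(c))`.
All `ω_n` edges leaving the vertex `n` thus have the same derivative there, and so do the
`ω_{n-1}` edges entering it; Kirchhoff's condition then becomes the difference equation
multiplied by `k / sin k`. -/

theorem eq_left_of_hasDerivWithinAt_zero {E : Type*} [NormedAddCommGroup E] [NormedSpace ℝ E]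
    {f : ℝ → E} {a b : ℝ}
    (hf : ∀ x ∈ Icc a b, HasDerivWithinAt f 0 (Icc a b) x) : ∀ x ∈ Icc a b, f x = f a :=
  constant_of_has_deriv_right_zero (fun x hx => (hf x hx).continuousWithinAt) fun x hx =>
    (hf x (mem_Icc_of_Ico hx)).mono_of_mem_nhdsWithin (Icc_mem_nhdsGE_of_mem hx)

section Harmonic

variable {k c d x : ℝ} {u u' : ℝ → ℝ} {s : Set ℝ}

theorem hasDerivWithinAt_harmonic_invariants (hk : k ≠ 0)
    (hu : HasDerivWithinAt u (u' x) s x) (hu' : HasDerivWithinAt u' (-(k ^ 2) * u x) s x) :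
    HasDerivWithinAt (fun y => u y * cos (k * (y - c)) - u' y / k * sin (k * (y - c))) 0 s x ∧
      HasDerivWithinAt (fun y => u y * sin (k * (y - c)) + u' y / k * cos (k * (y - c))) 0 s x := by
  have hθ : HasDerivAt (fun y => k * (y - c)) k x := by
    simpa using ((hasDerivAt_id x).sub_const c).const_mul k
  have hcos := hθ.cos.hasDerivWithinAt (s := s)
  have hsin := hθ.sin.hasDerivWithinAt (s := s)
  constructor
  · refine ((hu.mul hcos).sub ((hu'.div_const k).mul hsin)).congr_deriv ?_
    field_simp
    ring
  · refine ((hu.mul hsin).add ((hu'.div_const k).mul hcos)).congr_deriv ?_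
    field_simp
    ring

theorem harmonic_invariants_eq (hk : k ≠ 0)
    (hu : ∀ x ∈ Icc c d, HasDerivWithinAt u (u' x) (Icc c d) x)
    (hu' : ∀ x ∈ Icc c d, HasDerivWithinAt u' (-(k ^ 2) * u x) (Icc c d) x) (hx : x ∈ Icc c d) :
    u x * cos (k * (x - c)) - u' x / k * sin (k * (x - c)) = u c ∧
      u x * sin (k * (x - c)) + u' x / k * cos (k * (x - c)) = u' c / k := by
  have hinv y (hy : y ∈ Icc c d) :=
    hasDerivWithinAt_harmonic_invariants (c := c) hk (hu y hy) (hu' y hy)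
  constructor
  · simpa using eq_left_of_hasDerivWithinAt_zero (fun y hy => (hinv y hy).1) x hx
  · simpa using eq_left_of_hasDerivWithinAt_zero (fun y hy => (hinv y hy).2) x hx

theorem deriv_endpoints_eq_of_harmonic (hk : k ≠ 0) (hcd : c ≤ d) (hsin : sin (k * (d - c)) ≠ 0)
    (hu : ∀ x ∈ Icc c d, HasDerivWithinAt u (u' x) (Icc c d) x)
    (hu' : ∀ x ∈ Icc c d, HasDerivWithinAt u' (-(k ^ 2) * u x) (Icc c d) x) :
    u' c = k / sin (k * (d - c)) * (u d - u c * cos (k * (d - c))) ∧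
      u' d = k / sin (k * (d - c)) * (u d * cos (k * (d - c)) - u c) := by
  obtain ⟨hF, hG⟩ := harmonic_invariants_eq hk hu hu' (right_mem_Icc.mpr hcd)
  have hpyth := sin_sq_add_cos_sq (k * (d - c))
  field_simp at hF hG
  constructor
  · field_simp
    linear_combination -(cos (k * (d - c)) * hF + sin (k * (d - c)) * hG) + k * u d * hpyth
  · field_simp
    linear_combination -hF

end Harmonic

theorem statement1_general (k : ℝ) (hkπ : ∀ m : ℤ, k ≠ m * π)
    (ω : ℤ → ℕ)
    (u u' : ℤ → ℕ → ℝ → ℝ) (a : ℤ → ℝ)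
    (hu : ∀ (n : ℤ) (j : ℕ), 1 ≤ j → j ≤ ω n →
      ∀ x ∈ Icc (n : ℝ) ((n : ℝ) + 1),
        HasDerivWithinAt (u n j) (u' n j x) (Icc (n : ℝ) ((n : ℝ) + 1)) x)
    (hu'' : ∀ (n : ℤ) (j : ℕ), 1 ≤ j → j ≤ ω n →
      ∀ x ∈ Icc (n : ℝ) ((n : ℝ) + 1),
        HasDerivWithinAt (u' n j) (-(k ^ 2) * u n j x) (Icc (n : ℝ) ((n : ℝ) + 1)) x)
    (hvert : ∀ (n : ℤ) (j : ℕ), 1 ≤ j → j ≤ ω n →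
      u n j (n : ℝ) = a n ∧ u n j ((n : ℝ) + 1) = a (n + 1))
    (hKirchhoff : ∀ n : ℤ,
      ∑ j ∈ Finset.Icc 1 (ω n), u' n j (n : ℝ) =
      ∑ j ∈ Finset.Icc 1 (ω (n - 1)), u' (n - 1) j (n : ℝ)) :
    ∀ n : ℤ,
      (ω n : ℝ) * a (n + 1) + (ω (n - 1) : ℝ) * a (n - 1)
        - ((ω n : ℝ) + (ω (n - 1) : ℝ)) * Real.cos k * a n = 0 := by
  have hk : k ≠ 0 := by simpa using hkπ 0
  have hsin : sin k ≠ 0 := fun h => by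
    obtain ⟨m, hm⟩ := sin_eq_zero_iff.mp h
    exact hkπ m hm.symm
  have hedge (m : ℤ) (j : ℕ) (hj : j ∈ Finset.Icc 1 (ω m)) :
      u' m j m = k / sin k * (a (m + 1) - a m * cos k) ∧
        u' m j (m + 1) = k / sin k * (a (m + 1) * cos k - a m) := by
    obtain ⟨hj1, hjm⟩ := Finset.mem_Icc.mp hj
    obtain ⟨hleft, hright⟩ := hvert m j hj1 hjm
    have := deriv_endpoints_eq_of_harmonic hk (by linarith) (by simpa using hsin)
      (hu m j hj1 hjm) (hu'' m j hj1 hjm)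
    simpa [hleft, hright] using this
  intro n
  have hout := Finset.sum_congr rfl fun j hj => (hedge n j hj).1
  have hin := Finset.sum_congr rfl fun j hj => (hedge (n - 1) j hj).2
  have hK := hKirchhoff n
  push_cast at hin
  simp only [sub_add_cancel] at hin
  rw [hout, hin] at hK
  simp only [Finset.sum_const, Nat.card_Icc, add_tsub_cancel_right, nsmul_eq_mul] at hK
  apply mul_left_cancel₀ (div_ne_zero hk hsin)
  linear_combination hK

/-- Let `k > 0` not be an integer multiple of `π`, and let `ω : ℤ → ℕ` with `ω_n ≥ 1`.
Suppose for each `n ∈ ℤ` and `1 ≤ j ≤ ω_n` there is a twice differentiable function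
`u_{n,j}` on `[n, n+1]` (with derivative `u'_{n,j}` and second derivative
`−k²·u_{n,j}`), that `u_{n,j}(n) = a(n)` and `u_{n,j}(n+1) = a(n+1)` (continuity at
the vertices), and that Kirchhoff's condition
`Σ_{j=1}^{ω_n} u'_{n,j}(n) = Σ_{j=1}^{ω_{n−1}} u'_{n−1,j}(n)` holds at every vertex.
Then `ω_n·a(n+1) + ω_{n−1}·a(n−1) − (ω_n + ω_{n−1})·cos(k)·a(n) = 0` for all `n`. -/
theorem statement1 (k : ℝ) (hk : 0 < k) (hkπ : ∀ m : ℤ, k ≠ m * π)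
    (ω : ℤ → ℕ) (hω : ∀ n, 1 ≤ ω n)
    (u u' : ℤ → ℕ → ℝ → ℝ) (a : ℤ → ℝ)
    (hu : ∀ (n : ℤ) (j : ℕ), 1 ≤ j → j ≤ ω n →
      ∀ x ∈ Icc (n : ℝ) ((n : ℝ) + 1),
        HasDerivWithinAt (u n j) (u' n j x) (Icc (n : ℝ) ((n : ℝ) + 1)) x)
    (hu'' : ∀ (n : ℤ) (j : ℕ), 1 ≤ j → j ≤ ω n →
      ∀ x ∈ Icc (n : ℝ) ((n : ℝ) + 1),
        HasDerivWithinAt (u' n j) (-(k ^ 2) * u n j x) (Icc (n : ℝ) ((n : ℝ) + 1)) x)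
    (hvert : ∀ (n : ℤ) (j : ℕ), 1 ≤ j → j ≤ ω n →
      u n j (n : ℝ) = a n ∧ u n j ((n : ℝ) + 1) = a (n + 1))
    (hKirchhoff : ∀ n : ℤ,
      ∑ j ∈ Finset.Icc 1 (ω n), u' n j (n : ℝ) =
      ∑ j ∈ Finset.Icc 1 (ω (n - 1)), u' (n - 1) j (n : ℝ)) :
    ∀ n : ℤ,
      (ω n : ℝ) * a (n + 1) + (ω (n - 1) : ℝ) * a (n - 1)
        - ((ω n : ℝ) + (ω (n - 1) : ℝ)) * Real.cos k * a n = 0 :=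
  statement1_general k hkπ ω u u' a hu hu'' hvert hKirchhoff
end

section
/- Let k ∈ (0,π) with k ≠ π/2, and let x > 0 be a real number. If the complex number z = e^{ik} satisfies the quadratic equation (1 + 1/x)·cos(k)·z² − (1/x + (x + 2 + 1/x)·cos²(k) − x)·z + (1 + 1/x)·cos(k) = 0, then x = 1. -/
open Complex

/-- Let `k ∈ (0,π)` with `k ≠ π/2` and let `x > 0` be real.  If `z = e^{ik}`
satisfies the quadratic equation
`(1 + 1/x)·cos(k)·z² − (1/x + (x + 2 + 1/x)·cos²(k) − x)·z + (1 + 1/x)·cos(k) = 0`,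
then `x = 1`. -/
theorem statement14 (k x : ℝ) (hk : k ∈ Set.Ioo 0 Real.pi)
    (hk2 : k ≠ Real.pi / 2) (hx : 0 < x)
    (h : (1 + 1 / (x : ℂ)) * ((Real.cos k : ℝ) : ℂ) * Complex.exp (Complex.I * k) ^ 2
        - (1 / (x : ℂ) + ((x : ℂ) + 2 + 1 / (x : ℂ)) * ((Real.cos k : ℝ) : ℂ) ^ 2 - (x : ℂ))
            * Complex.exp (Complex.I * k)
        + (1 + 1 / (x : ℂ)) * ((Real.cos k : ℝ) : ℂ) = 0) :
    x = 1 := by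
  have hx0 : x ≠ 0 := hx.ne'
  have hs : Real.sin k ≠ 0 := (Real.sin_pos_of_pos_of_lt_pi hk.1 hk.2).ne'
  rw [mul_comm Complex.I (k:ℂ), Complex.exp_mul_I] at h
  rw [Complex.ext_iff] at h
  obtain ⟨hre, him⟩ := h
  simp [Complex.ext_iff, pow_two, hx0, Complex.cos_ofReal_re, Complex.sin_ofReal_re] at hre him
  have hsc := Real.sin_sq_add_cos_sq k
  field_simp at him
  have h1 : (x ^ 2 - 1) * Real.sin k ^ 3 = 0 := by
    linear_combination him + (x ^ 2 - 1) * Real.sin k * hsc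
  have hx2 : x ^ 2 = 1 := by
    rcases mul_eq_zero.mp h1 with h2 | h2
    · linarith
    · exact absurd h2 (pow_ne_zero 3 hs)
  have h3 : (x - 1) * (x + 1) = 0 := by linear_combination hx2
  rcases mul_eq_zero.mp h3 with h4 | h4 <;> linarith
end
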